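/- One has q_B ∈ (0,1), W(q_B) = μ − R, and W'(q_B) = 0; that is, the pair (q_B, d_B) solves the smooth-fit (value-matching and derivative-matching) system at the free boundary. -/

import Mathlib

set_option autoImplicit false

/-!
Differentiating `W(q) = q h + (1 - q) l + d q^a (1 - q)^b` with `a = (1 - k̃)/2`, `b = (1 + k̃)/2`
gives `W'(q) = h - l + d q^a (1 - q)^b (a/q - b/(1 - q))`. The choice of `d_B` makes
`d_B q_B^a (1 - q_B)^b = μ - R - W_0(q_B)` with `W_0` the affine part, which is value matching;
substituting it, and using `a + b = 1`, the condition `W'(q) = 0` becomes the linear equation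
`q ((h - l) b + l - μ + R) = (l - μ + R) a`, whose root is `q_B`.
-/

open Set

theorem one_lt_sqrt_one_add {x : ℝ} (hx : 0 < x) : 1 < √(1 + x) :=
  Real.lt_sqrt_of_sq_lt (by linarith)

theorem hasDerivAt_rpow_mul_one_sub_rpow {q : ℝ} (hq : q ∈ Ioo 0 1) (a b : ℝ) :
    HasDerivAt (fun x : ℝ => x ^ a * (1 - x) ^ b)
      (q ^ a * (1 - q) ^ b * (a / q - b / (1 - q))) q := by
  obtain ⟨hq0, hq1⟩ := hq
  have h1q : 0 < 1 - q := sub_pos.mpr hq1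
  have hleft : HasDerivAt (fun x : ℝ => x ^ a) (a * q ^ (a - 1)) q :=
    Real.hasDerivAt_rpow_const (Or.inl hq0.ne')
  have hright : HasDerivAt (fun x : ℝ => (1 - x) ^ b) (b * (1 - q) ^ (b - 1) * (-1)) q :=
    (Real.hasDerivAt_rpow_const (Or.inl h1q.ne')).comp q ((hasDerivAt_id q).const_sub 1)
  refine (hleft.mul hright).congr_deriv ?_
  rw [Real.rpow_sub hq0, Real.rpow_sub h1q, Real.rpow_one, Real.rpow_one]
  field_simp
  ring

theorem hasDerivAt_affine_add_rpow_mul_one_sub_rpow {q : ℝ} (hq : q ∈ Ioo 0 1)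
    (h l d a b : ℝ) :
    HasDerivAt (fun x : ℝ => x * h + (1 - x) * l + d * x ^ a * (1 - x) ^ b)
      (h - l + d * q ^ a * (1 - q) ^ b * (a / q - b / (1 - q))) q := by
  have haff : HasDerivAt (fun x : ℝ => x * h + (1 - x) * l) (h - l) q :=
    (((hasDerivAt_id' q).mul_const h).add
      (((hasDerivAt_id' q).const_sub 1).mul_const l)).congr_deriv (by ring)
  have hpow := (hasDerivAt_rpow_mul_one_sub_rpow hq a b).const_mul d
  simp only [← mul_assoc] at hpow
  exact haff.add hpow

section SmoothFit

variable {l h m a b : ℝ}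

theorem smoothFit_denom_pos (hlm : l < m) (hmh : m < h) (ha : a < 0) (hab : a + b = 1) :
    0 < (h - l) * b + l - m := by
  nlinarith

theorem smoothFit_mem_Ioo (hlm : l < m) (hmh : m < h) (ha : a < 0) (hab : a + b = 1) :
    (l - m) * a / ((h - l) * b + l - m) ∈ Ioo 0 1 := by
  have hD := smoothFit_denom_pos hlm hmh ha hab
  refine ⟨div_pos (by nlinarith) hD, (div_lt_one hD).mpr ?_⟩
  nlinarith

theorem smoothFit_slope_eq_zero {q : ℝ} (hab : a + b = 1) (hq : q ∈ Ioo 0 1)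
    (hq_eq : q * ((h - l) * b + l - m) = (l - m) * a) :
    h - l + (m - q * h - (1 - q) * l) * (a / q - b / (1 - q)) = 0 := by
  obtain rfl : b = 1 - a := by linarith
  obtain ⟨hq0, hq1⟩ := hq
  have h1q : 1 - q ≠ 0 := (sub_pos.mpr hq1).ne'
  field_simp
  linear_combination hq_eq

end SmoothFit

theorem stmt_9_general (l μ h ρ σt R : ℝ)
    (hμh : μ < h) (hρ : 0 < ρ) (hσt : 0 < σt)
    (hR : 0 < R) (hlR : l < μ - R)
    (kt qB dB : ℝ)
    (hkt : kt = Real.sqrt (1 + 8 * ρ * (σt / (h - l)) ^ 2))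
    (hqB : qB = (l - μ + R) * ((1 - kt) / 2)
      / ((h - l) * ((1 + kt) / 2) + l - μ + R))
    (hdB : dB = (μ - R - qB * h - (1 - qB) * l)
      / (qB ^ ((1 - kt) / 2) * (1 - qB) ^ ((1 + kt) / 2)))
    (W : ℝ → ℝ)
    (hW : ∀ q : ℝ, W q = q * h + (1 - q) * l
      + dB * q ^ ((1 - kt) / 2) * (1 - q) ^ ((1 + kt) / 2)) :
    qB ∈ Set.Ioo (0 : ℝ) 1 ∧ W qB = μ - R ∧ deriv W qB = 0 := by
  have hkt1 : 1 < kt := hkt ▸ one_lt_sqrt_one_add (by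
    have : 0 < h - l := by linarith
    positivity)
  have hmh : μ - R < h := by linarith
  have ha : (1 - kt) / 2 < 0 := by linarith
  have hab : (1 - kt) / 2 + (1 + kt) / 2 = 1 := by ring
  have hqB' : qB = (l - (μ - R)) * ((1 - kt) / 2)
      / ((h - l) * ((1 + kt) / 2) + l - (μ - R)) := by rw [hqB]; ring
  have hqB_mem : qB ∈ Ioo 0 1 := hqB' ▸ smoothFit_mem_Ioo hlR hmh ha hab
  have hmatch : dB * qB ^ ((1 - kt) / 2) * (1 - qB) ^ ((1 + kt) / 2)
      = μ - R - qB * h - (1 - qB) * l := by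
    have := Real.rpow_pos_of_pos hqB_mem.1 ((1 - kt) / 2)
    have := Real.rpow_pos_of_pos (sub_pos.mpr hqB_mem.2) ((1 + kt) / 2)
    rw [hdB]
    field_simp
  refine ⟨hqB_mem, by rw [hW, hmatch]; ring, ?_⟩
  rw [funext hW, (hasDerivAt_affine_add_rpow_mul_one_sub_rpow hqB_mem h l dB _ _).deriv,
    hmatch]
  refine smoothFit_slope_eq_zero hab hqB_mem ?_
  rw [hqB', div_mul_cancel₀ _ (smoothFit_denom_pos hlR hmh ha hab).ne']

/-- `q_B ∈ (0,1)`, `W(q_B) = μ − R` and `W'(q_B) = 0`: the pair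
`(q_B, d_B)` solves the smooth-fit system at the free boundary. -/
theorem stmt_9 (l μ h ρ σt R : ℝ)
    (hl : 0 < l) (hlμ : l < μ) (hμh : μ < h) (hρ : 0 < ρ) (hσt : 0 < σt)
    (hR : 0 < R) (hlR : l < μ - R)
    (kt qB dB : ℝ)
    (hkt : kt = Real.sqrt (1 + 8 * ρ * (σt / (h - l)) ^ 2))
    (hqB : qB = (l - μ + R) * ((1 - kt) / 2)
      / ((h - l) * ((1 + kt) / 2) + l - μ + R))
    (hdB : dB = (μ - R - qB * h - (1 - qB) * l)
      / (qB ^ ((1 - kt) / 2) * (1 - qB) ^ ((1 + kt) / 2)))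
    (W : ℝ → ℝ)
    (hW : ∀ q : ℝ, W q = q * h + (1 - q) * l
      + dB * q ^ ((1 - kt) / 2) * (1 - q) ^ ((1 + kt) / 2)) :
    qB ∈ Set.Ioo (0 : ℝ) 1 ∧ W qB = μ - R ∧ deriv W qB = 0 :=
  stmt_9_general l μ h ρ σt R hμh hρ hσt hR hlR kt qB dB hkt hqB hdB W hW
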